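/- Let M_1 and M_2 be matroids on finite ground sets E_1 and E_2 with E_1 \cap E_2 = {p}, where p is neither a loop nor a coloop of M_1 or of M_2, and let M_1 \oplus_2 M_2 be their 2-sum: the matroid on (E_1 \cup E_2) \setminus {p} whose independent sets are exactly the sets I_1 \cup I_2 with I_1 independent in M_1, I_2 independent in M_2, and either I_1 \cup {p} independent in M_1 or I_2 \cup {p} independent in M_2. Then (xy - x - y) T_{M_1 \oplus_2 M_2}(x,y) = (x-1) T_{M_1/p}(x,y) T_{M_2/p}(x,y) - T_{M_1/p}(x,y) T_{M_2 \setminus p}(x,y) - T_{M_1 \setminus p}(x,y) T_{M_2/p}(x,y) + (y-1) T_{M_1 \setminus p}(x,y) T_{M_2 \setminus p}(x,y). -/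

import Mathlib

/-!
Write a subset of `E(M) = (E₁ - p) ∪ (E₂ - p)` as `A₁ ∪ A₂` with `Aᵢ ⊆ Eᵢ - p`, and let
`δᵢ = rᵢ(Aᵢ + p) - rᵢ(Aᵢ) ∈ {0, 1}`. The rank of the 2-sum is
`r(A₁ ∪ A₂) + 1 = max (r₁(A₁ + p) + r₂(A₂)) (r₁(A₁) + r₂(A₂ + p))`;
as `p` is not a coloop, `r(M) + 1 = r₁(M₁) + r₂(M₂)`. So the term of `A₁ ∪ A₂` in `T_M` is
`(x-1)^(min δ₁ δ₂) (y-1)^(1 - max δ₁ δ₂) w₁ w₂` with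
`wᵢ = (x-1)^(rᵢ(Eᵢ) - rᵢ(Aᵢ + p)) (y-1)^(|Aᵢ| - rᵢ(Aᵢ))`, while the terms of `Aᵢ` in `Mᵢ \ p`
and `Mᵢ / p` are `(x-1)^δᵢ wᵢ` and `(y-1)^(1 - δᵢ) wᵢ`. Expanding both sides as sums over pairs
`(A₁, A₂)`, the identity then holds term by term, which is a check of four cases.
-/

open MvPolynomial Finset
open scoped Matroid

namespace TuttePaper

open Classical

variable {α : Type*}

/-- The rank of a set in a matroid: the maximum cardinality of an independent subset. -/
noncomputable def rk (M : Matroid α) (A : Set α) : ℕ :=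
  sSup {n | ∃ I, M.Indep I ∧ I ⊆ A ∧ I.ncard = n}

/-- The Tutte polynomial of a matroid with finite ground set, as an element of ℤ[x,y];
the variable `X 0` plays the role of `x` and `X 1` that of `y`:
`T_M(x,y) = ∑_{A ⊆ E} (x-1)^(r(E)-r(A)) (y-1)^(|A|-r(A))`. -/
noncomputable def tutte (M : Matroid α) : MvPolynomial (Fin 2) ℤ :=
  if hE : M.E.Finite then
    ∑ A ∈ hE.toFinset.powerset,
      (X 0 - 1) ^ (rk M M.E - rk M ↑A) * (X 1 - 1) ^ (A.card - rk M ↑A)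
  else 0

/-- The Tutte polynomial with `x` evaluated at `1`, i.e. `T_M(1,y)`, as an element of ℤ[x,y]. -/
noncomputable def tutteX1 (M : Matroid α) : MvPolynomial (Fin 2) ℤ :=
  eval₂ C (fun i => if i = 0 then 1 else X 1) (tutte M)

/-- A loop of a matroid: an element whose singleton has rank zero. -/
def IsLoop (M : Matroid α) (e : α) : Prop := rk M {e} = 0

/-- A coloop of a matroid: an element contained in every basis. -/
def IsColoop (M : Matroid α) (e : α) : Prop := ∀ B, M.IsBase B → e ∈ B

/-- A circuit of a matroid: a minimal dependent set. -/
def IsCircuit (M : Matroid α) (C : Set α) : Prop :=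
  C ⊆ M.E ∧ ¬ M.Indep C ∧ ∀ D ⊂ C, M.Indep D

/-- A hyperplane of a matroid: a flat of rank `r(M) - 1`. -/
def IsHyperplane (M : Matroid α) (H : Set α) : Prop :=
  M.IsFlat H ∧ rk M H + 1 = rk M M.E

/-- Deletion of a set of elements from a matroid. -/
def deleteSet (M : Matroid α) (D : Set α) : Matroid α := M ↾ (M.E \ D)

/-- Contraction of a set of elements in a matroid, `M/C = (M✶ \ C)✶`. -/
def contractSet (M : Matroid α) (C : Set α) : Matroid α := ((M✶) ↾ (M.E \ C))✶

/-- Deletion of a single element. -/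
def deleteElem (M : Matroid α) (e : α) : Matroid α := deleteSet M {e}

/-- Contraction of a single element. -/
def contractElem (M : Matroid α) (e : α) : Matroid α := contractSet M {e}

/-- A matroid is paving if every circuit has size at least the rank of the matroid. -/
def Paving (M : Matroid α) : Prop := ∀ C, IsCircuit M C → rk M M.E ≤ C.ncard

/-- A matroid is sparse paving if it is paving and any two distinct circuits of size `r(M)`
have symmetric difference of size greater than two. -/
def SparsePaving (M : Matroid α) : Prop :=
  Paving M ∧ ∀ C₁ C₂, IsCircuit M C₁ → IsCircuit M C₂ →
    C₁.ncard = rk M M.E → C₂.ncard = rk M M.E → C₁ ≠ C₂ → 2 < (symmDiff C₁ C₂).ncard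

/-- An `m`-partition of a set `E`: a collection of at least two subsets of `E`, each with at
least `m` elements, such that every `m`-element subset of `E` is contained in exactly one
member of the collection. -/
def IsMPartition (m : ℕ) (E : Set α) (T : Set (Set α)) : Prop :=
  1 < T.ncard ∧ (∀ B ∈ T, B ⊆ E ∧ m ≤ B.ncard) ∧
    ∀ S ⊆ E, S.ncard = m → ∃! B, B ∈ T ∧ S ⊆ B

/-- `tcoef M i j` is the coefficient `t_{ij}` of `x^i y^j` in the Tutte polynomial of `M`. -/
noncomputable def tcoef (M : Matroid α) (i j : ℕ) : ℤ :=
  MvPolynomial.coeff (Finsupp.single (0 : Fin 2) i + Finsupp.single (1 : Fin 2) j) (tutte M)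

/-- The characteristic polynomial `χ_N(λ) = ∑_{A ⊆ E} (-1)^{|A|} λ^{r(E)-r(A)}` of a matroid,
evaluated at an element `l` of a commutative ring. -/
noncomputable def charEval {R : Type*} [CommRing R] (N : Matroid α) (l : R) : R :=
  if hE : N.E.Finite then
    ∑ A ∈ hE.toFinset.powerset, (-1 : R) ^ A.card * l ^ (rk N N.E - rk N ↑A)
  else 0

/-- Crapo's coboundary polynomial `χ̄_M(λ,t) = ∑_{X flat of M} t^{|X|} χ_{M/X}(λ)`,
evaluated at elements `l`, `t` of a commutative ring. -/
noncomputable def cobEval {R : Type*} [CommRing R] (M : Matroid α) (l t : R) : R :=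
  if hE : M.E.Finite then
    (hE.toFinset.powerset.filter (fun F : Finset α => M.IsFlat ↑F)).sum
      (fun F => t ^ F.card * charEval (contractSet M ↑F) l)
  else 0

section Rank

variable {M : Matroid α} {A I C : Set α} {p : α}

lemma rk_eq_ncard_of_isBasis' (hE : M.E.Finite) (hI : M.IsBasis' I A) : rk M A = I.ncard := by
  have hfin {J : Set α} (hJ : M.Indep J) : J.Finite := hE.subset hJ.subset_ground
  refine le_antisymm (csSup_le ⟨_, I, hI.indep, hI.subset, rfl⟩ ?_) ?_
  · rintro _ ⟨J, hJ, hJA, rfl⟩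
    have : (J.ncard : ℕ∞) ≤ I.ncard := by
      rw [(hfin hJ).cast_ncard_eq, (hfin hI.indep).cast_ncard_eq, hI.encard_eq_eRk]
      exact hJ.encard_le_eRk_of_subset hJA
    exact_mod_cast this
  · refine le_csSup ⟨M.E.ncard, ?_⟩ ⟨I, hI.indep, hI.subset, rfl⟩
    rintro _ ⟨J, hJ, -, rfl⟩
    exact Set.ncard_le_ncard hJ.subset_ground hE

lemma le_rk (hE : M.E.Finite) (hI : M.Indep I) (hIA : I ⊆ A) : I.ncard ≤ rk M A := by
  obtain ⟨J, hJ, hIJ⟩ := hI.subset_isBasis'_of_subset hIA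
  rw [rk_eq_ncard_of_isBasis' hE hJ]
  exact Set.ncard_le_ncard hIJ (hE.subset hJ.indep.subset_ground)

lemma rk_le_rk_ground (hE : M.E.Finite) (A : Set α) : rk M A ≤ rk M M.E := by
  obtain ⟨I, hI⟩ := M.exists_isBasis' A
  rw [rk_eq_ncard_of_isBasis' hE hI]
  exact le_rk hE hI.indep hI.indep.subset_ground

lemma rk_le_ncard (hE : M.E.Finite) (hA : A.Finite) : rk M A ≤ A.ncard := by
  obtain ⟨I, hI⟩ := M.exists_isBasis' A
  rw [rk_eq_ncard_of_isBasis' hE hI]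
  exact Set.ncard_le_ncard hI.subset hA

lemma rk_mono (hE : M.E.Finite) {B : Set α} (hAB : A ⊆ B) : rk M A ≤ rk M B := by
  obtain ⟨I, hI⟩ := M.exists_isBasis' A
  rw [rk_eq_ncard_of_isBasis' hE hI]
  exact le_rk hE hI.indep (hI.subset.trans hAB)

lemma rk_insert_le (hE : M.E.Finite) (A : Set α) (p : α) : rk M (insert p A) ≤ rk M A + 1 := by
  obtain ⟨J, hJ⟩ := M.exists_isBasis' (insert p A)
  rw [rk_eq_ncard_of_isBasis' hE hJ]
  have := le_rk hE (hJ.indep.subset Set.sdiff_subset) (Set.sdiff_singleton_subset_iff.2 hJ.subset)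
  have := Set.pred_ncard_le_ncard_sdiff_singleton J p
  omega

lemma isNonloop_of_not_isLoop (hE : M.E.Finite) (hp : ¬ IsLoop M p) : M.IsNonloop p := by
  obtain ⟨I, hI⟩ := M.exists_isBasis' {p}
  rcases Set.subset_singleton_iff_eq.1 hI.subset with rfl | rfl
  · exact absurd (by simpa [IsLoop] using rk_eq_ncard_of_isBasis' hE hI) hp
  · exact Matroid.indep_singleton.1 hI.indep

lemma rk_sdiff_singleton_of_not_isColoop (hE : M.E.Finite) (hp : ¬ IsColoop M p) :
    rk M (M.E \ {p}) = rk M M.E := by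
  obtain ⟨B, hB, hpB⟩ : ∃ B, M.IsBase B ∧ p ∉ B := by simpa [IsColoop] using hp
  have hBE := hB.isBasis_ground
  have hBEp := hBE.isBasis_subset (Set.subset_sdiff_singleton hB.subset_ground hpB) Set.sdiff_subset
  rw [rk_eq_ncard_of_isBasis' hE hBE.isBasis', rk_eq_ncard_of_isBasis' hE hBEp.isBasis']

lemma rk_delete (hE : M.E.Finite) (D A : Set α) : rk (M ＼ D) A = rk M (A \ D) := by
  obtain ⟨I, hI⟩ := M.exists_isBasis' (A \ D)
  rw [rk_eq_ncard_of_isBasis' hE hI,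
    rk_eq_ncard_of_isBasis' hE.sdiff (Matroid.delete_isBasis'_iff.2 hI)]

lemma rk_contract_add_ncard (hE : M.E.Finite) (hC : M.Indep C) (hA : A ⊆ M.E \ C) :
    rk (M ／ C) A + C.ncard = rk M (A ∪ C) := by
  obtain ⟨J, hJ⟩ := (M ／ C).exists_isBasis' A
  have hJC : Disjoint J C := (Set.subset_sdiff.1 (hJ.subset.trans hA)).2
  rw [rk_eq_ncard_of_isBasis' hE.sdiff hJ, rk_eq_ncard_of_isBasis' hE
      (hC.union_isBasis_union_of_contract_isBasis (hJ.isBasis hA)).isBasis',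
    Set.ncard_union_eq hJC (hE.subset hJ.indep.of_contract.subset_ground)
      (hE.subset hC.subset_ground)]

end Rank

structure IsTwoSum (M M₁ M₂ : Matroid α) (p : α) : Prop where
  inter_ground : M₁.E ∩ M₂.E = {p}
  ground_eq : M.E = (M₁.E ∪ M₂.E) \ {p}
  indep_iff : ∀ I, M.Indep I ↔ ∃ I₁ I₂, M₁.Indep I₁ ∧ M₂.Indep I₂ ∧ p ∉ I₁ ∧ p ∉ I₂ ∧
    I = I₁ ∪ I₂ ∧ (M₁.Indep (insert p I₁) ∨ M₂.Indep (insert p I₂))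

namespace IsTwoSum

variable {M M₁ M₂ : Matroid α} {p : α} {A₁ A₂ : Set α}

lemma symm (h : IsTwoSum M M₁ M₂ p) : IsTwoSum M M₂ M₁ p where
  inter_ground := by rw [Set.inter_comm, h.inter_ground]
  ground_eq := by rw [Set.union_comm, h.ground_eq]
  indep_iff I := by
    rw [h.indep_iff]
    constructor <;> rintro ⟨I₁, I₂, h₁, h₂, hp₁, hp₂, rfl, hins⟩ <;>
      exact ⟨I₂, I₁, h₂, h₁, hp₂, hp₁, Set.union_comm _ _, hins.symm⟩

lemma disjoint_sdiff (h : IsTwoSum M M₁ M₂ p) : Disjoint (M₁.E \ {p}) (M₂.E \ {p}) :=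
  Set.disjoint_left.2 fun _ hx₁ hx₂ => hx₁.2 (h.inter_ground ▸ ⟨hx₁.1, hx₂.1⟩)

lemma ground_finite (h : IsTwoSum M M₁ M₂ p) (h₁ : M₁.E.Finite) (h₂ : M₂.E.Finite) :
    M.E.Finite :=
  h.ground_eq ▸ (h₁.union h₂).sdiff

lemma rk_insert_add_rk_le (h : IsTwoSum M M₁ M₂ p) (h₁ : M₁.E.Finite) (h₂ : M₂.E.Finite)
    (hp : M₁.IsNonloop p) (hA₁ : A₁ ⊆ M₁.E \ {p}) (hA₂ : A₂ ⊆ M₂.E \ {p}) :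
    rk M₁ (insert p A₁) + rk M₂ A₂ ≤ rk M (A₁ ∪ A₂) + 1 := by
  obtain ⟨B₁, hB₁, hpB₁⟩ :=
    hp.indep.subset_isBasis'_of_subset (Set.singleton_subset_iff.2 (Set.mem_insert p A₁))
  obtain ⟨I₂, hI₂⟩ := M₂.exists_isBasis' A₂
  have hpB₁ : p ∈ B₁ := hpB₁ rfl
  have hI₁A : B₁ \ {p} ⊆ A₁ := Set.sdiff_singleton_subset_iff.2 hB₁.subset
  have hindep : M.Indep (B₁ \ {p} ∪ I₂) :=
    (h.indep_iff _).2 ⟨B₁ \ {p}, I₂, hB₁.indep.subset Set.sdiff_subset, hI₂.indep,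
      fun h => h.2 rfl, fun h => (hA₂ (hI₂.subset h)).2 rfl, rfl,
      Or.inl (by rw [Set.insert_sdiff_self_of_mem hpB₁]; exact hB₁.indep)⟩
  have hcard : (B₁ \ {p} ∪ I₂).ncard + 1 = B₁.ncard + I₂.ncard := by
    rw [Set.ncard_union_eq (h.disjoint_sdiff.mono (hI₁A.trans hA₁) (hI₂.subset.trans hA₂))
      (h₁.subset hB₁.indep.subset_ground).sdiff (h₂.subset hI₂.indep.subset_ground),
      add_right_comm, Set.ncard_sdiff_singleton_add_one hpB₁ (h₁.subset hB₁.indep.subset_ground)]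
  rw [rk_eq_ncard_of_isBasis' h₁ hB₁, rk_eq_ncard_of_isBasis' h₂ hI₂]
  have := le_rk (h.ground_finite h₁ h₂) hindep (Set.union_subset_union hI₁A hI₂.subset)
  omega

lemma rk_union_add_one_le (h : IsTwoSum M M₁ M₂ p) (h₁ : M₁.E.Finite) (h₂ : M₂.E.Finite)
    (hA₁ : A₁ ⊆ M₁.E \ {p}) (hA₂ : A₂ ⊆ M₂.E \ {p}) :
    rk M (A₁ ∪ A₂) + 1 ≤ max (rk M₁ (insert p A₁) + rk M₂ A₂) (rk M₁ A₁ + rk M₂ (insert p A₂)) := by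
  obtain ⟨I, hI⟩ := M.exists_isBasis' (A₁ ∪ A₂)
  obtain ⟨I₁, I₂, hI₁, hI₂, hpI₁, hpI₂, rfl, hins⟩ := (h.indep_iff I).1 hI.indep
  have hI₁E : I₁ ⊆ M₁.E \ {p} := Set.subset_sdiff_singleton hI₁.subset_ground hpI₁
  have hI₂E : I₂ ⊆ M₂.E \ {p} := Set.subset_sdiff_singleton hI₂.subset_ground hpI₂
  have hI₁A : I₁ ⊆ A₁ := Disjoint.subset_left_of_subset_union
    (Set.subset_union_left.trans hI.subset) (h.disjoint_sdiff.mono hI₁E hA₂)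
  have hI₂A : I₂ ⊆ A₂ := Disjoint.subset_right_of_subset_union
    (Set.subset_union_right.trans hI.subset) (h.disjoint_sdiff.mono hA₁ hI₂E).symm
  have hI₁fin : I₁.Finite := h₁.subset hI₁.subset_ground
  have hI₂fin : I₂.Finite := h₂.subset hI₂.subset_ground
  rw [rk_eq_ncard_of_isBasis' (h.ground_finite h₁ h₂) hI,
    Set.ncard_union_eq (h.disjoint_sdiff.mono hI₁E hI₂E) hI₁fin hI₂fin]
  have := le_rk h₁ hI₁ hI₁A
  have := le_rk h₂ hI₂ hI₂A
  rcases hins with hins | hins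
  · have := le_rk h₁ hins (Set.insert_subset_insert hI₁A)
    rw [Set.ncard_insert_of_notMem hpI₁ hI₁fin] at this
    omega
  · have := le_rk h₂ hins (Set.insert_subset_insert hI₂A)
    rw [Set.ncard_insert_of_notMem hpI₂ hI₂fin] at this
    omega

lemma rk_union_add_one (h : IsTwoSum M M₁ M₂ p) (h₁ : M₁.E.Finite) (h₂ : M₂.E.Finite)
    (hp₁ : M₁.IsNonloop p) (hp₂ : M₂.IsNonloop p) (hA₁ : A₁ ⊆ M₁.E \ {p}) (hA₂ : A₂ ⊆ M₂.E \ {p}) :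
    rk M (A₁ ∪ A₂) + 1 = max (rk M₁ (insert p A₁) + rk M₂ A₂) (rk M₁ A₁ + rk M₂ (insert p A₂)) :=
  le_antisymm (h.rk_union_add_one_le h₁ h₂ hA₁ hA₂) <| max_le
    (h.rk_insert_add_rk_le h₁ h₂ hp₁ hA₁ hA₂)
    (by simpa only [Set.union_comm, add_comm] using h.symm.rk_insert_add_rk_le h₂ h₁ hp₂ hA₂ hA₁)

lemma rk_ground_add_one (h : IsTwoSum M M₁ M₂ p) (h₁ : M₁.E.Finite) (h₂ : M₂.E.Finite)
    (hp₁ : M₁.IsNonloop p) (hp₂ : M₂.IsNonloop p) (hc₁ : ¬ IsColoop M₁ p) (hc₂ : ¬ IsColoop M₂ p) :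
    rk M M.E + 1 = rk M₁ M₁.E + rk M₂ M₂.E := by
  rw [h.ground_eq, Set.union_sdiff_distrib, h.rk_union_add_one h₁ h₂ hp₁ hp₂ subset_rfl subset_rfl,
    Set.insert_sdiff_self_of_mem hp₁.mem_ground, Set.insert_sdiff_self_of_mem hp₂.mem_ground,
    rk_sdiff_singleton_of_not_isColoop h₁ hc₁, rk_sdiff_singleton_of_not_isColoop h₂ hc₂, max_self]

end IsTwoSum

lemma sum_powerset_union {β : Type*} [AddCommMonoid β] {s t : Finset α} (h : Disjoint s t)
    (f : Finset α → β) :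
    ∑ A ∈ (s ∪ t).powerset, f A = ∑ A ∈ s.powerset, ∑ B ∈ t.powerset, f (A ∪ B) := by
  induction t using Finset.induction_on generalizing f with
  | empty => simp
  | insert a t hat ih =>
    obtain ⟨has, hst⟩ := Finset.disjoint_insert_right.1 h
    rw [Finset.union_insert, Finset.sum_powerset_insert (by simp [has, hat]), ih hst,
      ih hst (fun A => f (insert a A)), ← Finset.sum_add_distrib]
    refine Finset.sum_congr rfl fun A _ => ?_
    simp only [Finset.sum_powerset_insert hat, Finset.union_insert]

noncomputable def tutteTerm (M : Matroid α) (A : Finset α) : MvPolynomial (Fin 2) ℤ :=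
  (X 0 - 1) ^ (rk M M.E - rk M ↑A) * (X 1 - 1) ^ (A.card - rk M ↑A)

lemma tutte_eq_sum_tutteTerm {M : Matroid α} {F : Finset α} (hF : (F : Set α) = M.E) :
    tutte M = ∑ A ∈ F.powerset, tutteTerm M A := by
  have hE : M.E.Finite := hF ▸ F.finite_toSet
  rw [tutte, dif_pos hE, show hE.toFinset = F from Finset.coe_injective (by simp [hF])]
  rfl

noncomputable def rkJump (N : Matroid α) (p : α) (A : Finset α) : ℕ := rk N (insert p ↑A) - rk N ↑A

noncomputable def insertTerm (N : Matroid α) (p : α) (A : Finset α) : MvPolynomial (Fin 2) ℤ :=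
  (X 0 - 1) ^ (rk N N.E - rk N (insert p ↑A)) * (X 1 - 1) ^ (A.card - rk N ↑A)

section Minor

variable {N : Matroid α} {p : α} {A : Finset α}

lemma rk_insert_bounds (hE : N.E.Finite) (p : α) (A : Finset α) :
    rk N ↑A ≤ A.card ∧ rk N ↑A ≤ rk N (insert p ↑A) ∧ rk N (insert p ↑A) ≤ rk N ↑A + 1 ∧
      rk N (insert p ↑A) ≤ rk N N.E :=
  ⟨by simpa using rk_le_ncard hE A.finite_toSet, rk_mono hE (Set.subset_insert p _),
    rk_insert_le hE _ p, rk_le_rk_ground hE _⟩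

lemma rkJump_le_one (hE : N.E.Finite) : rkJump N p A ≤ 1 := by
  have := (rk_insert_bounds hE p A).2.2.1
  unfold rkJump
  omega

lemma tutteTerm_deleteElem (hE : N.E.Finite) (hc : ¬ IsColoop N p) (hA : ↑A ⊆ N.E \ {p}) :
    tutteTerm (deleteElem N p) A = (X 0 - 1) ^ rkJump N p A * insertTerm N p A := by
  have hground : rk (N ＼ {p}) (N.E \ {p}) = rk N N.E := by
    rw [rk_delete hE, _root_.sdiff_idem, rk_sdiff_singleton_of_not_isColoop hE hc]
  have hrk : rk (N ＼ {p}) A = rk N A := by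
    rw [rk_delete hE, Set.sdiff_singleton_eq_self fun h => (hA h).2 rfl]
  obtain ⟨-, hmono, -, hle⟩ := rk_insert_bounds hE p A
  change (X 0 - 1) ^ (rk (N ＼ {p}) (N.E \ {p}) - rk (N ＼ {p}) A) *
    (X 1 - 1) ^ (A.card - rk (N ＼ {p}) A) = _
  rw [insertTerm, rkJump, hground, hrk, show rk N N.E - rk N A =
    (rk N (insert p A) - rk N A) + (rk N N.E - rk N (insert p A)) by omega, pow_add]
  ring

lemma tutteTerm_contractElem (hE : N.E.Finite) (hp : N.IsNonloop p) (hA : ↑A ⊆ N.E \ {p}) :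
    tutteTerm (contractElem N p) A = (X 1 - 1) ^ (1 - rkJump N p A) * insertTerm N p A := by
  have hcon {B : Set α} (hB : B ⊆ N.E \ {p}) : rk (N ／ {p}) B + 1 = rk N (insert p B) := by
    simpa using rk_contract_add_ncard hE hp.indep hB
  have hground := hcon subset_rfl
  rw [Set.insert_sdiff_self_of_mem hp.mem_ground] at hground
  have hrk := hcon hA
  obtain ⟨hcard, hmono, hins, -⟩ := rk_insert_bounds hE p A
  change (X 0 - 1) ^ (rk (N ／ {p}) (N.E \ {p}) - rk (N ／ {p}) A) *
    (X 1 - 1) ^ (A.card - rk (N ／ {p}) A) = _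
  rw [insertTerm, rkJump, show rk (N ／ {p}) (N.E \ {p}) - rk (N ／ {p}) A =
    rk N N.E - rk N (insert p A) by omega, show A.card - rk (N ／ {p}) A =
    (1 - (rk N (insert p A) - rk N A)) + (A.card - rk N A) by omega, pow_add]
  ring

end Minor

lemma IsTwoSum.tutteTerm_union {M M₁ M₂ : Matroid α} {p : α} (h : IsTwoSum M M₁ M₂ p)
    (h₁ : M₁.E.Finite) (h₂ : M₂.E.Finite) (hp₁ : M₁.IsNonloop p) (hp₂ : M₂.IsNonloop p)
    (hc₁ : ¬ IsColoop M₁ p) (hc₂ : ¬ IsColoop M₂ p) {A₁ A₂ : Finset α}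
    (hA₁ : ↑A₁ ⊆ M₁.E \ {p}) (hA₂ : ↑A₂ ⊆ M₂.E \ {p}) :
    tutteTerm M (A₁ ∪ A₂) = (X 0 - 1) ^ min (rkJump M₁ p A₁) (rkJump M₂ p A₂) *
      (X 1 - 1) ^ (1 - max (rkJump M₁ p A₁) (rkJump M₂ p A₂)) *
      (insertTerm M₁ p A₁ * insertTerm M₂ p A₂) := by
  have hground := h.rk_ground_add_one h₁ h₂ hp₁ hp₂ hc₁ hc₂
  have hunion := h.rk_union_add_one h₁ h₂ hp₁ hp₂ hA₁ hA₂
  have hcard : (A₁ ∪ A₂).card = A₁.card + A₂.card :=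
    Finset.card_union_of_disjoint (Finset.disjoint_coe.1 (h.disjoint_sdiff.mono hA₁ hA₂))
  have hbounds₁ := rk_insert_bounds h₁ p A₁
  have hbounds₂ := rk_insert_bounds h₂ p A₂
  have hpos : 1 ≤ rk M₁ (insert p ↑A₁) := by
    simpa using le_rk h₁ hp₁.indep (Set.singleton_subset_iff.2 (Set.mem_insert p (A₁ : Set α)))
  rw [tutteTerm, insertTerm, insertTerm, rkJump, rkJump, Finset.coe_union, hcard,
    show rk M M.E - rk M (↑A₁ ∪ ↑A₂) = (rk M₁ M₁.E - rk M₁ (insert p ↑A₁)) +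
      (rk M₂ M₂.E - rk M₂ (insert p ↑A₂)) + min (rk M₁ (insert p ↑A₁) - rk M₁ ↑A₁)
        (rk M₂ (insert p ↑A₂) - rk M₂ ↑A₂) by omega,
    show A₁.card + A₂.card - rk M (↑A₁ ∪ ↑A₂) = (A₁.card - rk M₁ ↑A₁) + (A₂.card - rk M₂ ↑A₂) +
      (1 - max (rk M₁ (insert p ↑A₁) - rk M₁ ↑A₁) (rk M₂ (insert p ↑A₂) - rk M₂ ↑A₂)) by omega,
    pow_add, pow_add, pow_add, pow_add]
  ring

lemma twoSum_tutte_identity {R : Type*} [CommRing R] (x y w₁ w₂ : R) {d₁ d₂ : ℕ}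
    (hd₁ : d₁ ≤ 1) (hd₂ : d₂ ≤ 1) :
    (x * y - x - y) * ((x - 1) ^ min d₁ d₂ * (y - 1) ^ (1 - max d₁ d₂) * (w₁ * w₂)) =
      (x - 1) * ((y - 1) ^ (1 - d₁) * w₁ * ((y - 1) ^ (1 - d₂) * w₂))
      - (y - 1) ^ (1 - d₁) * w₁ * ((x - 1) ^ d₂ * w₂)
      - (x - 1) ^ d₁ * w₁ * ((y - 1) ^ (1 - d₂) * w₂)
      + (y - 1) * ((x - 1) ^ d₁ * w₁ * ((x - 1) ^ d₂ * w₂)) := by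
  interval_cases d₁ <;> interval_cases d₂ <;>
    simp only [min_self, max_self, zero_le, inf_of_le_left, inf_of_le_right, sup_of_le_left,
      sup_of_le_right, tsub_self, tsub_zero, pow_zero, pow_one] <;>
    ring

/-- the formula of Andrzejak for the Tutte polynomial of a 2-sum. -/
theorem tutte_twoSum (M₁ M₂ M : Matroid α) (p : α)
    (h1 : M₁.E.Finite) (h2 : M₂.E.Finite) (hinter : M₁.E ∩ M₂.E = {p})
    (hl1 : ¬ IsLoop M₁ p) (hc1 : ¬ IsColoop M₁ p)
    (hl2 : ¬ IsLoop M₂ p) (hc2 : ¬ IsColoop M₂ p)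
    (hE : M.E = (M₁.E ∪ M₂.E) \ {p})
    (hIndep : ∀ I, M.Indep I ↔ ∃ I₁ I₂, M₁.Indep I₁ ∧ M₂.Indep I₂ ∧ p ∉ I₁ ∧ p ∉ I₂ ∧
      I = I₁ ∪ I₂ ∧ (M₁.Indep (insert p I₁) ∨ M₂.Indep (insert p I₂))) :
    (X 0 * X 1 - X 0 - X 1) * tutte M =
      (X 0 - 1) * (tutte (contractElem M₁ p) * tutte (contractElem M₂ p))
      - tutte (contractElem M₁ p) * tutte (deleteElem M₂ p)
      - tutte (deleteElem M₁ p) * tutte (contractElem M₂ p)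
      + (X 1 - 1) * (tutte (deleteElem M₁ p) * tutte (deleteElem M₂ p)) := by
  have h : IsTwoSum M M₁ M₂ p := ⟨hinter, hE, hIndep⟩
  have hp₁ := isNonloop_of_not_isLoop h1 hl1
  have hp₂ := isNonloop_of_not_isLoop h2 hl2
  have hF₁ : ((h1.toFinset.erase p : Finset α) : Set α) = M₁.E \ {p} := by simp
  have hF₂ : ((h2.toFinset.erase p : Finset α) : Set α) = M₂.E \ {p} := by simp
  rw [tutte_eq_sum_tutteTerm (M := M) (F := h1.toFinset.erase p ∪ h2.toFinset.erase p)
      (by rw [Finset.coe_union, hF₁, hF₂, hE, Set.union_sdiff_distrib]),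
    sum_powerset_union (Finset.disjoint_coe.1 (hF₁ ▸ hF₂ ▸ h.disjoint_sdiff)),
    tutte_eq_sum_tutteTerm (M := contractElem M₁ p) hF₁,
    tutte_eq_sum_tutteTerm (M := deleteElem M₁ p) hF₁,
    tutte_eq_sum_tutteTerm (M := contractElem M₂ p) hF₂,
    tutte_eq_sum_tutteTerm (M := deleteElem M₂ p) hF₂]
  simp only [Finset.sum_mul_sum]
  simp only [Finset.mul_sum, ← Finset.sum_sub_distrib, ← Finset.sum_add_distrib]
  refine Finset.sum_congr rfl fun A₁ hA₁ => Finset.sum_congr rfl fun A₂ hA₂ => ?_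
  have hA₁ : (A₁ : Set α) ⊆ M₁.E \ {p} := hF₁ ▸ Finset.coe_subset.2 (Finset.mem_powerset.1 hA₁)
  have hA₂ : (A₂ : Set α) ⊆ M₂.E \ {p} := hF₂ ▸ Finset.coe_subset.2 (Finset.mem_powerset.1 hA₂)
  rw [h.tutteTerm_union h1 h2 hp₁ hp₂ hc1 hc2 hA₁ hA₂,
    tutteTerm_contractElem h1 hp₁ hA₁, tutteTerm_deleteElem h1 hc1 hA₁,
    tutteTerm_contractElem h2 hp₂ hA₂, tutteTerm_deleteElem h2 hc2 hA₂]
  exact twoSum_tutte_identity _ _ _ _ (rkJump_le_one h1) (rkJump_le_one h2)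

end TuttePaper
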